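/- Let β > 0. There exist constants C, c > 0 such that for all x, y, t > 0 with xy ≤ t, the derivative of the Bessel heat kernel satisfies |∂_x T_t(x,y)| ≤ C t^{-1/2} (xy/t)^{β} exp(-(x²+y²)/(c t)) (1/x + x/t), where T_t(x,y) = (xy)^{1/2}/(2t) · I_{β-1/2}(xy/(2t)) · exp(-(x²+y²)/(4t)). -/

import Mathlib

open Real Set MeasureTheory

/-- Modified Bessel function of the first kind (series definition). -/
noncomputable def besselI (ν x : ℝ) : ℝ :=
  ∑' n : ℕ, (x/2) ^ ν * (x/2) ^ (2*n) / (Nat.factorial n * Real.Gamma (n + ν + 1))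

/-- The Bessel heat kernel. -/
noncomputable def TB (β t x y : ℝ) : ℝ :=
  (x*y) ^ ((1:ℝ)/2) / (2*t) * besselI (β - 1/2) (x*y/(2*t)) * Real.exp (-(x^2+y^2)/(4*t))

/-!
Put `u = xy/t` and `ν = β - 1/2`. Since `I_ν(z) = (z/2)^ν F_ν((z/2)²)` with the entire series
`F_ν(s) = ∑ sⁿ / (n! Γ(n+ν+1))`, the kernel factors as
`T_t(x,y) = t^{-1/2} / (2·4^ν) · u^β F_ν(u²/16) e^{-(x²+y²)/4t}`. Differentiating in `x`
(with `∂ₓu = u/x`) gives the same prefactor times `β F_ν/x + F_ν' u²/(8x) - F_ν x/(2t)`.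
For `ν > -1/2` we have `Γ(ν+1) ≤ 2ⁿ Γ(n+ν+1)`, so the coefficients of `F_ν` are at most
`K 2ⁿ/n!` with `K = 1/Γ(ν+1)`, and the geometric majorant `4K/2ⁿ` dominates the terms of both
`F_ν` and its termwise derivative on `|s| ≤ 1/4`. When `xy ≤ t` we have `u ≤ 1`, so that factor
is at most `8K(β+1)(1/x + x/t)`, and the claim holds with `c = 4`.
-/

open scoped Nat

section PowerSeries

variable {a : ℕ → ℝ} {K : ℝ}

lemma abs_mul_pow_le (ha : ∀ n, |a n| ≤ K * 2 ^ n / n !) {s : ℝ} (hs : |s| ≤ 1 / 4)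
    (n : ℕ) : |a n * s ^ n| ≤ 4 * K * (1 / 2) ^ n := by
  have hK : 0 ≤ K := by simpa using (abs_nonneg _).trans (ha 0)
  have hfac : (1 : ℝ) ≤ n ! := by exact_mod_cast n.factorial_pos
  calc |a n * s ^ n| ≤ K * 2 ^ n / n ! * (1 / 4) ^ n := by
        rw [abs_mul, abs_pow]; gcongr; exact ha n
    _ ≤ K * 2 ^ n * (1 / 4) ^ n := by
        gcongr; exact div_le_self (by positivity) hfac
    _ = K * (1 / 2) ^ n := by rw [mul_assoc, ← mul_pow]; norm_num
    _ ≤ 4 * K * (1 / 2) ^ n := by nlinarith [pow_nonneg (by norm_num : (0:ℝ) ≤ 1 / 2) n]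

lemma abs_natCast_mul_mul_pow_pred_le (ha : ∀ n, |a n| ≤ K * 2 ^ n / n !) {s : ℝ}
    (hs : |s| ≤ 1 / 4) (n : ℕ) : |n * a n * s ^ (n - 1)| ≤ 4 * K * (1 / 2) ^ n := by
  have hK : 0 ≤ K := by simpa using (abs_nonneg _).trans (ha 0)
  have hcoeff : n * |a n| ≤ K * 2 ^ n := by
    have hn : (n : ℝ) ≤ n ! := by exact_mod_cast n.self_le_factorial
    calc n * |a n| ≤ n ! * (K * 2 ^ n / n !) := by gcongr; exact ha n
      _ = K * 2 ^ n := mul_div_cancel₀ _ (by positivity)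
  have hpow : |s| ^ (n - 1) ≤ 4 * (1 / 4) ^ n := by
    refine (pow_le_pow_left₀ (abs_nonneg s) hs _).trans ?_
    cases n with
    | zero => norm_num
    | succ m => rw [Nat.add_sub_cancel, pow_succ]; exact le_of_eq (by ring)
  calc |n * a n * s ^ (n - 1)| = n * |a n| * |s| ^ (n - 1) := by
        rw [abs_mul, abs_mul, Nat.abs_cast, abs_pow]
    _ ≤ K * 2 ^ n * (4 * (1 / 4) ^ n) := by gcongr
    _ = 4 * K * (2 * (1 / 4)) ^ n := by rw [mul_pow]; ring
    _ = 4 * K * (1 / 2) ^ n := by norm_num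

lemma hasSum_geometric_majorant (K : ℝ) : HasSum (fun n : ℕ ↦ 4 * K * (1 / 2 : ℝ) ^ n) (8 * K) := by
  have h := hasSum_geometric_two.mul_left (4 * K)
  rwa [show 4 * K * 2 = 8 * K by ring] at h

lemma abs_tsum_le_of_le_geometric {f : ℕ → ℝ} (hf : ∀ n, |f n| ≤ 4 * K * (1 / 2) ^ n) :
    |∑' n, f n| ≤ 8 * K := by
  simpa only [Real.norm_eq_abs] using tsum_of_norm_bounded (f := f) (hasSum_geometric_majorant K)
    (by simpa only [Real.norm_eq_abs] using hf)

lemma hasDerivAt_tsum_mul_pow (ha : ∀ n, |a n| ≤ K * 2 ^ n / n !) {s : ℝ}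
    (hs : s ∈ Ioo (-(1 / 4)) (1 / 4)) :
    HasDerivAt (fun z ↦ ∑' n, a n * z ^ n) (∑' n, n * a n * s ^ (n - 1)) s := by
  have habs {z : ℝ} (hz : z ∈ Ioo (-(1 / 4) : ℝ) (1 / 4)) : |z| ≤ 1 / 4 :=
    abs_le.2 ⟨hz.1.le, hz.2.le⟩
  refine hasDerivAt_tsum_of_isPreconnected (g := fun n z ↦ a n * z ^ n)
    (g' := fun n z ↦ n * a n * z ^ (n - 1)) ((hasSum_geometric_majorant K).summable) isOpen_Ioo
    isPreconnected_Ioo (fun n z _ ↦ ?_) (fun n z hz ↦ abs_natCast_mul_mul_pow_pred_le ha (habs hz) n)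
    (y₀ := 0) (by norm_num) ?_ hs
  · simpa [mul_comm, mul_assoc, mul_left_comm] using (hasDerivAt_pow n z).const_mul (a n)
  · exact ((hasSum_geometric_majorant K).summable).of_norm_bounded
      fun n ↦ abs_mul_pow_le ha (by norm_num) n

end PowerSeries

lemma Gamma_le_two_pow_mul_Gamma_add_nat {ν : ℝ} (hν : -(1 / 2) < ν) (n : ℕ) :
    Gamma (ν + 1) ≤ 2 ^ n * Gamma (n + ν + 1) := by
  induction n with
  | zero => simp
  | succ n ih =>
    have hpos : 0 < (n : ℝ) + ν + 1 := by linarith [(Nat.cast_nonneg n : (0 : ℝ) ≤ n)]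
    have hstep : Gamma ((n + 1 : ℕ) + ν + 1) = ((n : ℝ) + ν + 1) * Gamma (n + ν + 1) := by
      rw [← Gamma_add_one hpos.ne']; push_cast; ring_nf
    have hhalf : (1 : ℝ) / 2 ≤ n + ν + 1 := by linarith [(Nat.cast_nonneg n : (0 : ℝ) ≤ n)]
    have hΓ := (Gamma_pos_of_pos hpos).le
    calc Gamma (ν + 1) ≤ 2 ^ n * 2 * (1 / 2 * Gamma (n + ν + 1)) := by linarith
      _ ≤ 2 ^ n * 2 * ((n + ν + 1) * Gamma (n + ν + 1)) := by gcongr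
      _ = 2 ^ (n + 1) * Gamma ((n + 1 : ℕ) + ν + 1) := by rw [hstep, pow_succ]

noncomputable def besselCoeff (ν : ℝ) (n : ℕ) : ℝ := 1 / (n ! * Gamma (n + ν + 1))

noncomputable def besselSeries (ν s : ℝ) : ℝ := ∑' n, besselCoeff ν n * s ^ n

noncomputable def besselSeriesDeriv (ν s : ℝ) : ℝ := ∑' n, n * besselCoeff ν n * s ^ (n - 1)

lemma abs_besselCoeff_le {ν : ℝ} (hν : -(1 / 2) < ν) (n : ℕ) :
    |besselCoeff ν n| ≤ (Gamma (ν + 1))⁻¹ * 2 ^ n / n ! := by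
  have hΓ : 0 < Gamma (n + ν + 1) :=
    Gamma_pos_of_pos (by linarith [(Nat.cast_nonneg n : (0 : ℝ) ≤ n)])
  have hΓ₀ : 0 < Gamma (ν + 1) := Gamma_pos_of_pos (by linarith)
  rw [besselCoeff, abs_of_pos (by positivity), div_le_div_iff₀ (by positivity) (by positivity)]
  have hΓle := Gamma_le_two_pow_mul_Gamma_add_nat hν n
  field_simp
  nlinarith [(Nat.cast_pos.2 n.factorial_pos : (0 : ℝ) < n !)]

lemma besselI_eq_rpow_mul_besselSeries (ν u : ℝ) :
    besselI ν u = (u / 2) ^ ν * besselSeries ν ((u / 2) ^ 2) := by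
  rw [besselI, besselSeries, ← tsum_mul_left]
  exact tsum_congr fun n ↦ by rw [besselCoeff, ← pow_mul]; ring

lemma hasDerivAt_besselSeries {ν s : ℝ} (hν : -(1 / 2) < ν) (hs : s ∈ Ioo (-(1 / 4)) (1 / 4)) :
    HasDerivAt (besselSeries ν) (besselSeriesDeriv ν s) s :=
  hasDerivAt_tsum_mul_pow (abs_besselCoeff_le hν) hs

lemma abs_besselSeries_le {ν s : ℝ} (hν : -(1 / 2) < ν) (hs : |s| ≤ 1 / 4) :
    |besselSeries ν s| ≤ 8 * (Gamma (ν + 1))⁻¹ :=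
  abs_tsum_le_of_le_geometric (abs_mul_pow_le (abs_besselCoeff_le hν) hs)

lemma abs_besselSeriesDeriv_le {ν s : ℝ} (hν : -(1 / 2) < ν) (hs : |s| ≤ 1 / 4) :
    |besselSeriesDeriv ν s| ≤ 8 * (Gamma (ν + 1))⁻¹ :=
  abs_tsum_le_of_le_geometric (abs_natCast_mul_mul_pow_pred_le (abs_besselCoeff_le hν) hs)

lemma TB_eq_rpow_mul_besselSeries {β t x y : ℝ} (ht : 0 < t) (hx : 0 < x) (hy : 0 < y) :
    TB β t x y = t ^ (-(1:ℝ)/2) / (2 * 4 ^ (β - 1/2)) * ((x * y / t) ^ β *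
      besselSeries (β - 1/2) ((x * y / t) ^ 2 / 16) * exp (-(x^2 + y^2) / (4 * t))) := by
  set u := x * y / t with hu_def
  have hu : 0 < u := by positivity
  have hxy : x * y = u * t := by rw [hu_def]; field_simp
  have harg : x * y / (2 * t) / 2 = u / 4 := by rw [hu_def]; ring
  have hsq : (u / 4) ^ 2 = u ^ 2 / 16 := by ring
  have hhalf : u ^ ((1:ℝ)/2) * u ^ (β - 1/2) = u ^ β := by rw [← rpow_add hu]; norm_num
  have ht_half : t ^ ((1:ℝ)/2) / t = t ^ (-(1:ℝ)/2) := by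
    rw [← rpow_sub_one ht.ne']; norm_num
  rw [TB, besselI_eq_rpow_mul_besselSeries, harg, hsq, hxy, mul_rpow hu.le ht.le,
    div_rpow hu.le (by norm_num : (0:ℝ) ≤ 4), ← hhalf, ← ht_half]
  field_simp

lemma hasDerivAt_kernel_profile {β t x y F' : ℝ} {F : ℝ → ℝ} (ht : 0 < t) (hx : 0 < x)
    (hy : 0 < y) (hF : HasDerivAt F F' ((x * y / t) ^ 2 / 16)) :
    HasDerivAt (fun x' ↦ (x' * y / t) ^ β * F ((x' * y / t) ^ 2 / 16) *
        exp (-(x'^2 + y^2) / (4 * t)))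
      ((x * y / t) ^ β * exp (-(x^2 + y^2) / (4 * t)) * (β * F ((x * y / t) ^ 2 / 16) / x +
        F' * (x * y / t) ^ 2 / (8 * x) - F ((x * y / t) ^ 2 / 16) * x / (2 * t))) x := by
  have hu : 0 < x * y / t := by positivity
  have hlin : HasDerivAt (fun x' ↦ x' * y / t) (y / t) x := by
    simpa using ((hasDerivAt_id x).mul_const y).div_const t
  have hpow : HasDerivAt (fun x' ↦ (x' * y / t) ^ β) (β * (x * y / t) ^ (β - 1) * (y / t)) x :=
    (hlin.rpow_const (p := β) (Or.inl hu.ne')).congr_deriv (by ring)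
  have hser : HasDerivAt (fun x' ↦ F ((x' * y / t) ^ 2 / 16))
      (F' * (2 * (x * y / t) * (y / t) / 16)) x :=
    hF.comp x (((hlin.pow 2).div_const 16).congr_deriv (by ring))
  have hexp : HasDerivAt (fun x' ↦ exp (-(x'^2 + y^2) / (4 * t)))
      (exp (-(x^2 + y^2) / (4 * t)) * (-(2 * x) / (4 * t))) x :=
    ((((hasDerivAt_pow 2 x).add_const (y^2)).neg.div_const (4 * t)).congr_deriv (by ring)).exp
  refine ((hpow.fun_mul hser).fun_mul hexp).congr_deriv ?_
  rw [rpow_sub_one hu.ne']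
  field_simp
  ring

lemma abs_kernel_profile_factor_le {β t x u f f' M : ℝ} (hβ : 0 ≤ β) (ht : 0 < t) (hx : 0 < x)
    (hu : |u| ≤ 1) (hf : |f| ≤ M) (hf' : |f'| ≤ M) :
    |β * f / x + f' * u ^ 2 / (8 * x) - f * x / (2 * t)| ≤ (β + 1) * M * (1 / x + x / t) := by
  have hM : 0 ≤ M := (abs_nonneg f).trans hf
  have hu2 : u ^ 2 ≤ 1 := by nlinarith [abs_nonneg u, sq_abs u]
  have h₁ : |β * f / x| ≤ β * M / x := by
    rw [abs_div, abs_mul, abs_of_nonneg hβ, abs_of_pos hx]; gcongr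
  have h₂ : |f' * u ^ 2 / (8 * x)| ≤ M / x := by
    rw [abs_div, abs_mul, abs_of_nonneg (sq_nonneg u), abs_of_pos (by positivity : (0:ℝ) < 8 * x)]
    calc |f'| * u ^ 2 / (8 * x) ≤ M * 1 / (1 * x) := by gcongr; norm_num
      _ = M / x := by ring
  have h₃ : |f * x / (2 * t)| ≤ M * x / t := by
    rw [abs_div, abs_mul, abs_of_pos hx, abs_of_pos (by positivity : (0:ℝ) < 2 * t)]
    calc |f| * x / (2 * t) ≤ M * x / (1 * t) := by gcongr; norm_num
      _ = M * x / t := by ring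
  calc _ ≤ |β * f / x| + |f' * u ^ 2 / (8 * x)| + |f * x / (2 * t)| :=
        (abs_sub _ _).trans (by gcongr; exact abs_add_le _ _)
    _ ≤ β * M / x + M / x + M * x / t := by gcongr
    _ ≤ (β + 1) * M * (1 / x + x / t) := by
        have : 0 ≤ β * M * (x / t) := by positivity
        linarith [show β * M / x + M / x + M * x / t + β * M * (x / t) =
          (β + 1) * M * (1 / x + x / t) by ring]

theorem bessel_kernel_derivative_bound_small (β : ℝ) (hβ : 0 < β) :
    ∃ C c : ℝ, 0 < C ∧ 0 < c ∧ ∀ t x y : ℝ, 0 < t → 0 < x → 0 < y → x*y ≤ t →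
      |deriv (fun x' => TB β t x' y) x| ≤
        C * t ^ (-(1:ℝ)/2) * (x*y/t) ^ β * Real.exp (-(x^2+y^2)/(c*t)) * (1/x + x/t) := by
  have hν : -(1 / 2) < β - 1 / 2 := by linarith
  set M := 8 * (Gamma (β - 1 / 2 + 1))⁻¹
  have hM : 0 < M := by have := Gamma_pos_of_pos (by linarith : 0 < β - 1 / 2 + 1); positivity
  refine ⟨(β + 1) * M / (2 * 4 ^ (β - 1 / 2)), 4, by positivity, by norm_num,
    fun t x y ht hx hy hxy ↦ ?_⟩
  set u := x * y / t
  have hu : 0 < u := by positivity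
  have hu_abs : |u| ≤ 1 := by rw [abs_of_pos hu]; exact (div_le_one ht).2 hxy
  have hs : |u ^ 2 / 16| < 1 / 4 := by
    rw [abs_of_pos (by positivity)]; nlinarith [abs_le.1 hu_abs]
  have hderiv := ((hasDerivAt_kernel_profile (β := β) ht hx hy
    (hasDerivAt_besselSeries hν (abs_lt.1 hs))).const_mul
      (t ^ (-(1:ℝ)/2) / (2 * 4 ^ (β - 1/2)))).congr_of_eventuallyEq
    (eventually_gt_nhds hx |>.mono fun x' hx' ↦ TB_eq_rpow_mul_besselSeries ht hx' hy)
  rw [hderiv.deriv, abs_mul, abs_mul, abs_of_pos (by positivity), abs_of_pos (by positivity)]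
  calc _ ≤ t ^ (-(1:ℝ)/2) / (2 * 4 ^ (β - 1/2)) * (u ^ β * exp (-(x^2 + y^2) / (4 * t)) *
        ((β + 1) * M * (1 / x + x / t))) := by
        gcongr
        exact abs_kernel_profile_factor_le hβ.le ht hx hu_abs (abs_besselSeries_le hν hs.le)
          (abs_besselSeriesDeriv_le hν hs.le)
    _ = _ := by ring
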